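/- Let T be a list of natural numbers, all < 2^k. For every ℓ with 0 ≤ ℓ < k, the level-(ℓ+1) stable reversed-prefix sort is obtained from the level-ℓ one by a stable partition on bit ℓ: R_{ℓ+1}(T) = (R_ℓ(T)).filter(λ c, bit(ℓ, c) = 0) ++ (R_ℓ(T)).filter(λ c, bit(ℓ, c) = 1). (This is the correctness of the bottom-up/recursive construction of the wavelet matrix.) -/

import Mathlib

/-- `brev m c`: the number whose `m`-bit binary representation is the reverse of that of `c`
(bit-reversal `rev_m`). -/
def brev (m c : ℕ) : ℕ := ∑ j ∈ Finset.range m, ((c / 2^j) % 2) * 2^(m-1-j)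

/-- `bpre k ℓ c`: the bit prefix of length `ℓ` of a `k`-bit number `c`
(its `ℓ` most significant bits). -/
def bpre (k ℓ c : ℕ) : ℕ := c / 2^(k-ℓ)

/-- `wbit k j c`: the `j`-th bit (from MSB to LSB) of the `k`-bit number `c`. -/
def wbit (k j c : ℕ) : ℕ := (c / 2^(k-1-j)) % 2

/-- Level-`ℓ` stable prefix sort `S_ℓ(T)`: concatenation over `p = 0,…,2^ℓ-1` of the
sublists of `T` whose length-`ℓ` bit prefix equals `p`. -/
def wsortS (k ℓ : ℕ) (T : List ℕ) : List ℕ :=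
  (List.range (2^ℓ)).flatMap (fun p => T.filter (fun c => bpre k ℓ c = p))

/-- Level-`ℓ` stable reversed-prefix sort `R_ℓ(T)`: concatenation over `v = 0,…,2^ℓ-1` of the
sublists of `T` whose reversed length-`ℓ` bit prefix equals `v`. -/
def wsortR (k ℓ : ℕ) (T : List ℕ) : List ℕ :=
  (List.range (2^ℓ)).flatMap (fun v => T.filter (fun c => brev ℓ (bpre k ℓ c) = v))

/-- `wrank b B i`: number of occurrences of `b` among the first `i` entries of `B`. -/
def wrank (b : ℕ) (B : List ℕ) (i : ℕ) : ℕ := ((B.take i).filter (fun x => x = b)).length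

/-- `wselect b B i`: 0-based position in `B` of the `i`-th occurrence of `b`
(occurrences counted starting from `i = 1`). -/
def wselect (b : ℕ) (B : List ℕ) (i : ℕ) : ℕ :=
  ((List.range B.length).filter (fun j => B.getD j 2 = b)).getD (i-1) 0

/-- Unary histogram bit vector `U(T)` of a text over alphabet `[0,σ)`:
`1^{m_0} 0 1^{m_1} 0 ⋯ 0 1^{m_{σ-1}}` where `m_c` is the number of occurrences of `c` in `T`. -/
def unaryHist (σ : ℕ) (T : List ℕ) : List ℕ :=
  List.intercalate [0] ((List.range σ).map (fun c => List.replicate (T.count c) 1))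


lemma flatMap_congr' {α β : Type} {l : List α} {f g : α → List β}
    (h : ∀ x ∈ l, f x = g x) : l.flatMap f = l.flatMap g := by
  induction l with
  | nil => rfl
  | cons a l ih =>
    simp only [List.flatMap_cons]
    rw [h a List.mem_cons_self, ih (fun x hx => h x (List.mem_cons_of_mem a hx))]

lemma brev_succ (m q : ℕ) : brev (m+1) q = q % 2 * 2^m + brev m (q/2) := by
  unfold brev
  rw [Finset.sum_range_succ']
  rw [add_comm]
  congr 1
  · simp
  · apply Finset.sum_congr rfl
    intro j hj
    have h1 : q / 2 ^ (j + 1) = q / 2 / 2 ^ j := by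
      rw [Nat.div_div_eq_div_mul, ← pow_succ']
    rw [h1]
    congr 2
    omega

lemma brev_lt (m q : ℕ) : brev m q < 2^m := by
  induction m generalizing q with
  | zero => simp [brev]
  | succ m ih =>
    rw [brev_succ]
    have h1 : q % 2 * 2^m ≤ 1 * 2^m := Nat.mul_le_mul_right _ (by omega)
    have h2 := ih (q/2)
    have h3 : (2:ℕ)^(m+1) = 2*2^m := by ring
    omega

lemma brev_bpre_succ (k ℓ c : ℕ) (hℓ : ℓ < k) :
    brev (ℓ+1) (bpre k (ℓ+1) c) = wbit k ℓ c * 2^ℓ + brev ℓ (bpre k ℓ c) := by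
  rw [brev_succ]
  unfold bpre wbit
  rw [show k - 1 - ℓ = k - (ℓ+1) from by omega,
      Nat.div_div_eq_div_mul,
      show 2^(k-(ℓ+1)) * 2 = 2^(k-ℓ) from by rw [← pow_succ]; congr 1; omega]

theorem wsortR_succ (k : ℕ) (hk : 1 ≤ k) (T : List ℕ) (hT : ∀ c ∈ T, c < 2^k)
    (ℓ : ℕ) (hℓ : ℓ < k) :
    wsortR k (ℓ+1) T =
      (wsortR k ℓ T).filter (fun c => wbit k ℓ c = 0) ++
        (wsortR k ℓ T).filter (fun c => wbit k ℓ c = 1) := by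
  unfold wsortR
  rw [show (2:ℕ)^(ℓ+1) = 2^ℓ + 2^ℓ from by ring, List.range_add, List.flatMap_append,
      List.flatMap_map, List.filter_flatMap, List.filter_flatMap]
  congr 1
  · apply flatMap_congr'
    intro v hv
    rw [List.mem_range] at hv
    rw [List.filter_filter]
    apply List.filter_congr
    intro c _
    have hkey := brev_bpre_succ k ℓ c hℓ
    have hb : wbit k ℓ c < 2 := Nat.mod_lt _ two_pos
    have hr := brev_lt ℓ (bpre k ℓ c)
    rw [hkey]
    rcases (by omega : wbit k ℓ c = 0 ∨ wbit k ℓ c = 1) with h | h <;>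
      simp [h] <;> omega
  · apply flatMap_congr'
    intro v hv
    rw [List.mem_range] at hv
    rw [List.filter_filter]
    apply List.filter_congr
    intro c _
    have hkey := brev_bpre_succ k ℓ c hℓ
    have hb : wbit k ℓ c < 2 := Nat.mod_lt _ two_pos
    have hr := brev_lt ℓ (bpre k ℓ c)
    rw [hkey]
    rcases (by omega : wbit k ℓ c = 0 ∨ wbit k ℓ c = 1) with h | h <;>
      simp [h] <;> omega
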